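/- arXiv:1512.00601 — 4 statements merged into one kernel-verified Lean document; each statement's English description precedes it below -/
import Mathlib

section
/- Let N = 1ₙ - WW̄ be invertible with W symmetric complex n×n, and define for indices p ≤ q, m ≤ n the matrices h^k_{pq,mn} = 2M_{mp}M_{nq}(1-δ_{pq}) + 2M_{mq}M_{np}(1-δ_{mn}) + M²_{mp}δ_{pq}δ_{mn} where M = N⁻¹, and k_{mn,uv} = (1/2)(N_{vn}N̄_{mu} + N_{vm}N̄_{nu}). Then for all p ≤ q and u ≤ v, the sum over m ≤ n of h^k_{pq,mn}·k_{mn,uv} equals Δ^{uv}_{pq} := δ_{up}δ_{vq} + δ_{uq}δ_{vp} - δ_{uv}δ_{pq}δ_{up}. -/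
open Matrix BigOperators

noncomputable section

/-- entrywise complex conjugation of a matrix -/
def mconj {m n : Type*} (A : Matrix m n ℂ) : Matrix m n ℂ := A.map (starRingEnd ℂ)

/-- Kronecker delta in ℂ -/
def kd {d : ℕ} (i j : Fin d) : ℂ := if i = j then 1 else 0

private lemma sum_triangle {d : ℕ} (f : Fin d → Fin d → ℂ)
    (hf : ∀ m n, f m n = f n m) :
    ∑ m : Fin d, ∑ n : Fin d, (if m ≤ n then f m n else 0)
      = ((∑ m : Fin d, ∑ n : Fin d, f m n) + ∑ m : Fin d, f m m) / 2 := by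
  have hswap : (∑ m : Fin d, ∑ n : Fin d, (if m ≤ n then f m n else 0))
      = ∑ m : Fin d, ∑ n : Fin d, (if n ≤ m then f m n else 0) := by
    rw [Finset.sum_comm]
    exact Finset.sum_congr rfl fun m _ => Finset.sum_congr rfl fun n _ => by rw [hf]
  have key : ∀ m n : Fin d, (if m ≤ n then f m n else 0) + (if n ≤ m then f m n else 0)
      = f m n + (if m = n then f m n else 0) := by
    intro m n
    rcases lt_trichotomy m n with h|h|h
    · simp [le_of_lt h, not_le.mpr h, h.ne]
    · simp [h]
    · simp [not_le.mpr h, le_of_lt h, h.ne']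
  have h2 : (∑ m : Fin d, ∑ n : Fin d, (if m ≤ n then f m n else 0))
      + (∑ m : Fin d, ∑ n : Fin d, (if m ≤ n then f m n else 0))
      = (∑ m : Fin d, ∑ n : Fin d, f m n) + ∑ m : Fin d, f m m := by
    nth_rewrite 2 [hswap]
    rw [← Finset.sum_add_distrib]
    simp_rw [← Finset.sum_add_distrib, key, Finset.sum_add_distrib, Finset.sum_ite_eq,
      Finset.mem_univ, if_true]
  rw [eq_div_iff (by norm_num : (2:ℂ) ≠ 0), mul_two]
  exact h2

/-- the matrix k_{mn,uv} = (1/2)(N_{vn}N̄_{mu} + N_{vm}N̄_{nu}) is the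
"inverse" of the Siegel ball metric matrix
h^k_{pq,mn} = 2M_{mp}M_{nq}(1-δ_{pq}) + 2M_{mq}M_{np}(1-δ_{mn}) + M²_{mp}δ_{pq}δ_{mn}:
the sum over m ≤ n of h^k_{pq,mn} k_{mn,uv} equals
Δ^{uv}_{pq} = δ_{up}δ_{vq} + δ_{uq}δ_{vp} - δ_{uv}δ_{pq}δ_{up}. -/
theorem hk_inverse (d : ℕ) (W : Matrix (Fin d) (Fin d) ℂ) (hWsymm : Wᵀ = W)
    (hinv : IsUnit ((1 : Matrix (Fin d) (Fin d) ℂ) - W * mconj W))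
    (N Nb M : Matrix (Fin d) (Fin d) ℂ)
    (hN : N = 1 - W * mconj W) (hNb : Nb = 1 - mconj W * W) (hM : M = N⁻¹)
    (hk : Fin d → Fin d → Fin d → Fin d → ℂ)
    (hhk : ∀ p q m n, hk p q m n =
      2 * M m p * M n q * (1 - kd p q) + 2 * M m q * M n p * (1 - kd m n)
        + M m p * M m p * kd p q * kd m n)
    (kk : Fin d → Fin d → Fin d → Fin d → ℂ)
    (hkk : ∀ m n u v, kk m n u v = (1/2) * (N v n * Nb m u + N v m * Nb n u)) :
    ∀ p q u v : Fin d, p ≤ q → u ≤ v →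
      (∑ m : Fin d, ∑ n : Fin d, if m ≤ n then hk p q m n * kk m n u v else 0)
        = kd u p * kd v q + kd u q * kd v p - kd u v * kd p q * kd u p := by
  intro p q u v hpq huv
  -- W symmetric entrywise
  have hW : ∀ i j, W i j = W j i := fun i j => congrFun (congrFun hWsymm j) i
  -- Nb is the transpose of N
  have hNbT : ∀ i j, Nb i j = N j i := by
    intro i j
    rw [hN, hNb]
    simp only [Matrix.sub_apply, Matrix.one_apply, Matrix.mul_apply, mconj, Matrix.map_apply]
    rw [show ((if i = j then (1:ℂ) else 0) = if j = i then 1 else 0) by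
      by_cases h : i = j <;> simp [h, Ne.symm, eq_comm]]
    congr 1
    apply Finset.sum_congr rfl
    intro k _
    rw [hW i k, hW k j]
    ring
  -- invertibility
  have hNdet : IsUnit N.det := by
    rw [← Matrix.isUnit_iff_isUnit_det, hN]; exact hinv
  have hNM : N * M = 1 := by rw [hM]; exact Matrix.mul_nonsing_inv N hNdet
  -- entry identities
  have hid : ∀ x y : Fin d, (∑ n : Fin d, N x n * M n y) = kd x y := by
    intro x y
    have h := congrFun (congrFun hNM x) y
    simpa [Matrix.mul_apply, Matrix.one_apply, kd] using h
  have hid2 : ∀ x y : Fin d, (∑ n : Fin d, Nb n x * M n y) = kd x y := by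
    intro x y
    rw [← hid x y]
    exact Finset.sum_congr rfl fun n _ => by rw [hNbT]
  -- symmetry of the summand
  have hsymm : ∀ m n, hk p q m n * kk m n u v = hk p q n m * kk n m u v := by
    intro m n
    have hkk1 : kk m n u v = kk n m u v := by rw [hkk, hkk]; ring
    have hhk1 : hk p q m n = hk p q n m := by
      rw [hhk, hhk]
      rcases eq_or_ne m n with h|h
      · subst h; ring
      · rcases eq_or_ne p q with h2|h2
        · subst h2
          simp only [kd, if_pos rfl, if_neg h, if_neg (Ne.symm h)]
          ring
        · simp only [kd, if_neg h, if_neg (Ne.symm h), if_neg h2]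
          ring
    rw [hkk1, hhk1]
  rw [sum_triangle _ hsymm]
  -- inner sums
  have inner : ∀ m, (∑ n : Fin d, hk p q m n * kk m n u v)
      = ((1 - kd p q) * (M m p * Nb m u)) * kd v q
      + ((1 - kd p q) * (M m p * N v m)) * kd u q
      + (M m q * Nb m u) * kd v p
      + (M m q * N v m) * kd u p
      + (- (2 * (M m q * M m p * N v m * Nb m u))
          + kd p q * (M m p * M m p * N v m * Nb m u)) := by
    intro m
    have expand : ∀ n, hk p q m n * kk m n u v
        = ((1 - kd p q) * (M m p * Nb m u)) * (N v n * M n q)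
        + ((1 - kd p q) * (M m p * N v m)) * (Nb n u * M n q)
        + (M m q * Nb m u) * (N v n * M n p)
        + (M m q * N v m) * (Nb n u * M n p)
        + (if m = n then (- (M m q * M n p) * (N v n * Nb m u + N v m * Nb n u)
            + kd p q * (M m p * M m p) * (1/2) * (N v n * Nb m u + N v m * Nb n u)) else 0) := by
      intro n
      rcases eq_or_ne m n with h|h
      · rw [hhk, hkk, if_pos h]
        have : kd m n = 1 := by simp [kd, h]
        rw [this]; ring
      · rw [hhk, hkk, if_neg h]
        have : kd m n = 0 := by simp [kd, h]
        rw [this]; ring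
    simp_rw [expand]
    rw [Finset.sum_add_distrib, Finset.sum_add_distrib, Finset.sum_add_distrib,
      Finset.sum_add_distrib, ← Finset.mul_sum, ← Finset.mul_sum, ← Finset.mul_sum,
      ← Finset.mul_sum, hid, hid2, hid, hid2, Finset.sum_ite_eq]
    simp only [Finset.mem_univ, if_true]
    ring
  simp_rw [inner]
  -- diagonal
  have diag : ∀ m : Fin d, hk p q m m * kk m m u v
      = 2 * (1 - kd p q) * (M m q * M m p * N v m * Nb m u)
        + kd p q * (M m p * M m p * N v m * Nb m u) := by
    intro m
    have h1 : kd m m = 1 := by simp [kd]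
    rw [hhk, hkk, h1]; ring
  simp_rw [diag]
  -- collapse all the sums
  rw [Finset.sum_add_distrib, Finset.sum_add_distrib, Finset.sum_add_distrib,
    Finset.sum_add_distrib, Finset.sum_add_distrib,
    ← Finset.sum_mul, ← Finset.sum_mul, ← Finset.sum_mul, ← Finset.sum_mul]
  have s1 : (∑ i : Fin d, M i p * Nb i u) = kd u p := by
    rw [← hid2 u p]; exact Finset.sum_congr rfl fun i _ => mul_comm _ _
  have s2 : (∑ i : Fin d, M i p * N v i) = kd v p := by
    rw [← hid v p]; exact Finset.sum_congr rfl fun i _ => mul_comm _ _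
  have s3 : (∑ i : Fin d, M i q * Nb i u) = kd u q := by
    rw [← hid2 u q]; exact Finset.sum_congr rfl fun i _ => mul_comm _ _
  have s4 : (∑ i : Fin d, M i q * N v i) = kd v q := by
    rw [← hid v q]; exact Finset.sum_congr rfl fun i _ => mul_comm _ _
  have e1 : (∑ i : Fin d, (1 - kd p q) * (M i p * Nb i u)) = (1 - kd p q) * kd u p := by
    rw [← Finset.mul_sum, s1]
  have e2 : (∑ i : Fin d, (1 - kd p q) * (M i p * N v i)) = (1 - kd p q) * kd v p := by
    rw [← Finset.mul_sum, s2]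
  have e3 : (∑ x : Fin d, -(2 * (M x q * M x p * N v x * Nb x u)))
      = -(2 * ∑ x : Fin d, M x q * M x p * N v x * Nb x u) := by
    rw [Finset.sum_neg_distrib, ← Finset.mul_sum]
  have e4 : (∑ x : Fin d, kd p q * (M x p * M x p * N v x * Nb x u))
      = kd p q * ∑ x : Fin d, M x p * M x p * N v x * Nb x u := by
    rw [← Finset.mul_sum]
  have e5 : (∑ x : Fin d, (2 * (1 - kd p q) * (M x q * M x p * N v x * Nb x u)
        + kd p q * (M x p * M x p * N v x * Nb x u)))
      = 2 * (1 - kd p q) * (∑ x : Fin d, M x q * M x p * N v x * Nb x u)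
        + kd p q * ∑ x : Fin d, M x p * M x p * N v x * Nb x u := by
    rw [Finset.sum_add_distrib, ← Finset.mul_sum, ← Finset.mul_sum]
  rw [e1, e2, e3, e4, e5, s3, s4]
  have hKT : (kd p q * ∑ x : Fin d, M x p * M x p * N v x * Nb x u)
      = kd p q * ∑ x : Fin d, M x q * M x p * N v x * Nb x u := by
    rcases eq_or_ne p q with h|h
    · subst h; rfl
    · simp [kd, h]
  rw [hKT]
  have hfin : kd p q * (kd u p * kd v q + kd u q * kd v p)
      = 2 * (kd u v * kd p q * kd u p) := by
    rcases eq_or_ne p q with h|h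
    · subst h
      have hone : kd p p = 1 := by simp [kd]
      have key2 : kd u p * kd v p = kd u v * kd u p := by
        rcases eq_or_ne u p with h1|h1
        · subst h1
          rcases eq_or_ne v u with h2|h2
          · subst h2; simp [kd]
          · simp [kd, h2, Ne.symm h2]
        · simp [kd, h1]
      rw [hone]
      linear_combination 2 * key2
    · simp [kd, h]
  linear_combination (-1/2 : ℂ) * hfin
end
end

section
/- Under the hypotheses of the Sp(n,ℝ)_ℂ action on the Siegel ball, the differential of the moved point W₁ = (pW + q)(q̄W + p̄)⁻¹ satisfies dW₁ = (Wq* + p*)⁻¹ dW (q̄W + p̄)⁻¹. Consequently, the trace form Tr(M dW M̄ dW̄) is invariant: Tr(M₁ dW₁ M̄₁ dW̄₁) = Tr(M dW M̄ dW̄). -/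
/-!
Put `g = [[p, q], [q̄, p̄]]` and `J = diag(1, -1)`; the hypotheses say `g* J g = J`. Multiplying
`[1, W] g* J` by `g` gives `[1, W] J`, i.e. with `B = W q* + p*` and `N = W pᵀ + qᵀ`,
`B p - N q̄ = 1` and `B q - N p̄ = -W`. Everything else is algebra on these two identities:
`B (p W + q) = N (q̄ W + p̄)`, so `W₁ = B⁻¹ N`; `B (p - W₁ q̄) = 1`, so `B⁻¹ = p - W₁ q̄`, which is
exactly what the quotient rule produces for `dW₁`; and `1 - W₁ W̄₁ = B⁻¹ (1 - W W̄) (q W̄ + p)⁻¹`,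
so `M₁ = (q W̄ + p) M B` and the trace form is conjugated by `q W̄ + p`.
-/

open Matrix

noncomputable section

section mconj

variable {l m n : Type*}

@[simp] lemma mconj_apply (A : Matrix m n ℂ) (i : m) (j : n) : mconj A i j = star (A i j) := rfl

@[simp] lemma mconj_add (A B : Matrix m n ℂ) : mconj (A + B) = mconj A + mconj B := by
  ext; simp

@[simp] lemma mconj_sub (A B : Matrix m n ℂ) : mconj (A - B) = mconj A - mconj B := by
  ext; simp

@[simp] lemma mconj_mul [Fintype m] (A : Matrix l m ℂ) (B : Matrix m n ℂ) :
    mconj (A * B) = mconj A * mconj B :=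
  Matrix.map_mul

@[simp] lemma mconj_one [DecidableEq n] : mconj (1 : Matrix n n ℂ) = 1 :=
  Matrix.map_one _ (map_zero _) (map_one _)

@[simp] lemma mconj_mconj (A : Matrix m n ℂ) : mconj (mconj A) = A := by
  ext; simp

@[simp] lemma mconj_transpose (A : Matrix m n ℂ) : mconj Aᵀ = Aᴴ := rfl

@[simp] lemma mconj_conjTranspose (A : Matrix m n ℂ) : mconj Aᴴ = Aᵀ := by
  ext; simp

lemma mconj_eq_conjTranspose_transpose (A : Matrix m n ℂ) : mconj A = Aᴴᵀ := rfl

@[simp] lemma mconj_nonsing_inv [Fintype n] [DecidableEq n] (A : Matrix n n ℂ) :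
    mconj A⁻¹ = (mconj A)⁻¹ := by
  simp only [mconj_eq_conjTranspose_transpose, conjTranspose_nonsing_inv, transpose_nonsing_inv]

lemma isUnit_mconj [Fintype n] [DecidableEq n] {A : Matrix n n ℂ} (hA : IsUnit A) :
    IsUnit (mconj A) :=
  (isUnit_transpose _).mpr ((isUnit_conjTranspose A).mpr hA)

end mconj

section SiegelAction

variable {ι : Type*} [Fintype ι] [DecidableEq ι] {p q : Matrix ι ι ℂ}

lemma mul_p_sub_mul_mconj_q (h3 : pᴴ * p - qᵀ * mconj q = 1) (h4 : pᵀ * mconj q = qᴴ * p)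
    (W : Matrix ι ι ℂ) : (W * qᴴ + pᴴ) * p - (W * pᵀ + qᵀ) * mconj q = 1 := by
  calc (W * qᴴ + pᴴ) * p - (W * pᵀ + qᵀ) * mconj q
      = W * (qᴴ * p - pᵀ * mconj q) + (pᴴ * p - qᵀ * mconj q) := by noncomm_ring
    _ = 1 := by rw [h3, h4, sub_self, mul_zero, zero_add]

lemma mul_q_sub_mul_mconj_p (h3 : pᴴ * p - qᵀ * mconj q = 1) (h4 : pᵀ * mconj q = qᴴ * p)
    (W : Matrix ι ι ℂ) : (W * qᴴ + pᴴ) * q - (W * pᵀ + qᵀ) * mconj p = -W := by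
  have h3' : pᵀ * mconj p - qᴴ * q = 1 := by simpa using congrArg mconj h3
  have h4' : pᴴ * q = qᵀ * mconj p := by simpa using congrArg mconj h4
  calc (W * qᴴ + pᴴ) * q - (W * pᵀ + qᵀ) * mconj p
      = -W * (pᵀ * mconj p - qᴴ * q) + (pᴴ * q - qᵀ * mconj p) := by noncomm_ring
    _ = -W := by rw [h3', h4', sub_self, mul_one, add_zero]

lemma mul_numerator_eq_mul_denominator (h3 : pᴴ * p - qᵀ * mconj q = 1)
    (h4 : pᵀ * mconj q = qᴴ * p) (W : Matrix ι ι ℂ) :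
    (W * qᴴ + pᴴ) * (p * W + q) = (W * pᵀ + qᵀ) * (mconj q * W + mconj p) := by
  rw [← sub_eq_zero]
  calc (W * qᴴ + pᴴ) * (p * W + q) - (W * pᵀ + qᵀ) * (mconj q * W + mconj p)
      = ((W * qᴴ + pᴴ) * p - (W * pᵀ + qᵀ) * mconj q) * W
        + ((W * qᴴ + pᴴ) * q - (W * pᵀ + qᵀ) * mconj p) := by noncomm_ring
    _ = 0 := by rw [mul_p_sub_mul_mconj_q h3 h4, mul_q_sub_mul_mconj_p h3 h4]; noncomm_ring

lemma mul_mconj_denominator_sub_mul_mconj_numerator (h3 : pᴴ * p - qᵀ * mconj q = 1)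
    (h4 : pᵀ * mconj q = qᴴ * p) (W : Matrix ι ι ℂ) :
    (W * qᴴ + pᴴ) * mconj (mconj q * W + mconj p)
      - (W * pᵀ + qᵀ) * mconj (p * W + q) = 1 - W * mconj W := by
  calc (W * qᴴ + pᴴ) * mconj (mconj q * W + mconj p) - (W * pᵀ + qᵀ) * mconj (p * W + q)
      = ((W * qᴴ + pᴴ) * q - (W * pᵀ + qᵀ) * mconj p) * mconj W
        + ((W * qᴴ + pᴴ) * p - (W * pᵀ + qᵀ) * mconj q) := by
        simp only [mconj_add, mconj_mul, mconj_mconj]; noncomm_ring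
    _ = 1 - W * mconj W := by
      rw [mul_p_sub_mul_mconj_q h3 h4, mul_q_sub_mul_mconj_p h3 h4]; noncomm_ring

lemma mul_sub_moebius_mul_mconj_q (h3 : pᴴ * p - qᵀ * mconj q = 1)
    (h4 : pᵀ * mconj q = qᴴ * p) {W : Matrix ι ι ℂ} (hA : IsUnit (mconj q * W + mconj p)) :
    (W * qᴴ + pᴴ) * (p - (p * W + q) * (mconj q * W + mconj p)⁻¹ * mconj q) = 1 := by
  have hA' := (isUnit_iff_isUnit_det _).mp hA
  calc (W * qᴴ + pᴴ) * (p - (p * W + q) * (mconj q * W + mconj p)⁻¹ * mconj q)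
      = (W * qᴴ + pᴴ) * p
        - (W * qᴴ + pᴴ) * (p * W + q) * (mconj q * W + mconj p)⁻¹ * mconj q := by noncomm_ring
    _ = (W * qᴴ + pᴴ) * p - (W * pᵀ + qᵀ) * mconj q := by
      rw [mul_numerator_eq_mul_denominator h3 h4, mul_nonsing_inv_cancel_right _ _ hA']
    _ = 1 := mul_p_sub_mul_mconj_q h3 h4 W

lemma inv_left_factor (h3 : pᴴ * p - qᵀ * mconj q = 1)
    (h4 : pᵀ * mconj q = qᴴ * p) {W : Matrix ι ι ℂ} (hA : IsUnit (mconj q * W + mconj p)) :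
    (W * qᴴ + pᴴ)⁻¹ = p - (p * W + q) * (mconj q * W + mconj p)⁻¹ * mconj q :=
  inv_eq_right_inv (mul_sub_moebius_mul_mconj_q h3 h4 hA)

lemma isUnit_left_factor (h3 : pᴴ * p - qᵀ * mconj q = 1)
    (h4 : pᵀ * mconj q = qᴴ * p) {W : Matrix ι ι ℂ} (hA : IsUnit (mconj q * W + mconj p)) :
    IsUnit (W * qᴴ + pᴴ) :=
  (isUnit_iff_isUnit_det _).mpr
    (isUnit_det_of_right_inverse (mul_sub_moebius_mul_mconj_q h3 h4 hA))

lemma moebius_eq_inv_mul (h3 : pᴴ * p - qᵀ * mconj q = 1)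
    (h4 : pᵀ * mconj q = qᴴ * p) {W : Matrix ι ι ℂ} (hA : IsUnit (mconj q * W + mconj p)) :
    (p * W + q) * (mconj q * W + mconj p)⁻¹ = (W * qᴴ + pᴴ)⁻¹ * (W * pᵀ + qᵀ) := by
  have hA' := (isUnit_iff_isUnit_det _).mp hA
  have hB' := (isUnit_iff_isUnit_det _).mp (isUnit_left_factor h3 h4 hA)
  rw [← nonsing_inv_mul_cancel_left _ (p * W + q) hB', mul_assoc, mul_assoc,
    ← mul_assoc _ (p * W + q), mul_numerator_eq_mul_denominator h3 h4,
    mul_nonsing_inv_cancel_right _ _ hA']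

lemma one_sub_moebius_mul_mconj (h3 : pᴴ * p - qᵀ * mconj q = 1)
    (h4 : pᵀ * mconj q = qᴴ * p) {W : Matrix ι ι ℂ} (hA : IsUnit (mconj q * W + mconj p)) :
    1 - (p * W + q) * (mconj q * W + mconj p)⁻¹ * mconj ((p * W + q) * (mconj q * W + mconj p)⁻¹)
      = (W * qᴴ + pᴴ)⁻¹ * (1 - W * mconj W) * (mconj (mconj q * W + mconj p))⁻¹ := by
  have hAc' := (isUnit_iff_isUnit_det _).mp (isUnit_mconj hA)
  have hB' := (isUnit_iff_isUnit_det _).mp (isUnit_left_factor h3 h4 hA)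
  conv_lhs => rw [mconj_mul, mconj_nonsing_inv, moebius_eq_inv_mul h3 h4 hA]
  rw [← mul_mconj_denominator_sub_mul_mconj_numerator h3 h4 W]
  simp only [mul_sub, sub_mul, ← mul_assoc, nonsing_inv_mul _ hB', one_mul, mul_nonsing_inv _ hAc']

lemma inv_one_sub_moebius_mul_mconj (h3 : pᴴ * p - qᵀ * mconj q = 1)
    (h4 : pᵀ * mconj q = qᴴ * p) {W : Matrix ι ι ℂ} (hA : IsUnit (mconj q * W + mconj p)) :
    (1 - (p * W + q) * (mconj q * W + mconj p)⁻¹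
        * mconj ((p * W + q) * (mconj q * W + mconj p)⁻¹))⁻¹
      = mconj (mconj q * W + mconj p) * (1 - W * mconj W)⁻¹ * (W * qᴴ + pᴴ) := by
  have hAc' := (isUnit_iff_isUnit_det _).mp (isUnit_mconj hA)
  have hB' := (isUnit_iff_isUnit_det _).mp (isUnit_left_factor h3 h4 hA)
  rw [one_sub_moebius_mul_mconj h3 h4 hA, Matrix.mul_inv_rev, Matrix.mul_inv_rev,
    nonsing_inv_nonsing_inv _ hAc', nonsing_inv_nonsing_inv _ hB', mul_assoc]

end SiegelAction

lemma trace_mconj_form_congr {ι : Type*} [Fintype ι] [DecidableEq ι] {A B : Matrix ι ι ℂ}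
    (hA : IsUnit A) (hB : IsUnit B) (M X : Matrix ι ι ℂ) :
    trace (mconj A * M * B * (B⁻¹ * X * A⁻¹) * mconj (mconj A * M * B)
        * mconj (B⁻¹ * X * A⁻¹)) = trace (M * X * mconj M * mconj X) := by
  have hA' := (isUnit_iff_isUnit_det _).mp hA
  have hB' := (isUnit_iff_isUnit_det _).mp hB
  have hBc' := (isUnit_iff_isUnit_det _).mp (isUnit_mconj hB)
  rw [← trace_conj (isUnit_mconj hA) (M * X * mconj M * mconj X)]
  simp only [mconj_mul, mconj_mconj, mconj_nonsing_inv, mul_assoc,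
    mul_nonsing_inv_cancel_left _ _ hB', nonsing_inv_mul_cancel_left _ _ hA',
    mul_nonsing_inv_cancel_left _ _ hBc']

theorem hasDerivAt_matrix_iff {m n 𝕜 E : Type*} [Fintype m] [Fintype n]
    [NontriviallyNormedField 𝕜] [NormedAddCommGroup E] [NormedSpace 𝕜 E]
    {f : 𝕜 → Matrix m n E} {f' : Matrix m n E} {t : 𝕜} :
    HasDerivAt f f' t ↔ ∀ i j, HasDerivAt (fun s => f s i j) (f' i j) t :=
  hasDerivAt_pi.trans (forall_congr' fun _ => hasDerivAt_pi)

section Derivative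

-- Matrices carry no canonical norm, but `HasDerivAt` only depends on the topology, so any
-- submultiplicative norm gives access to the calculus of complete normed rings.
attribute [local instance] Matrix.linftyOpNormedRing Matrix.linftyOpNormedAlgebra

variable {ι : Type*} [Fintype ι] [DecidableEq ι]

theorem HasDerivAt.matrix_inv {𝕜 α : Type*} [NontriviallyNormedField 𝕜]
    [NontriviallyNormedField α] [ProperSpace α] [NormedAlgebra 𝕜 α]
    {A : 𝕜 → Matrix ι ι α} {A' : Matrix ι ι α} {t : 𝕜} (hA : HasDerivAt A A' t)
    (hu : IsUnit (A t)) :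
    HasDerivAt (fun s => (A s)⁻¹) (-((A t)⁻¹ * A' * (A t)⁻¹)) t := by
  have : ProperSpace (Matrix ι ι α) := FiniteDimensional.proper α _
  obtain ⟨u, hu⟩ := hu
  have h := (hu ▸ hasFDerivAt_ringInverse (𝕜 := 𝕜) u).comp_hasDerivAt t hA
  simp only [Function.comp_def, ← nonsing_inv_eq_ringInverse, coe_units_inv, hu] at h
  exact h

theorem hasDerivAt_moebius {p q : Matrix ι ι ℂ} (h3 : pᴴ * p - qᵀ * mconj q = 1)
    (h4 : pᵀ * mconj q = qᴴ * p) {W : ℝ → Matrix ι ι ℂ} {W' : Matrix ι ι ℂ} {t : ℝ}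
    (hW : HasDerivAt W W' t) (hA : IsUnit (mconj q * W t + mconj p)) :
    HasDerivAt (fun s => (p * W s + q) * (mconj q * W s + mconj p)⁻¹)
      ((W t * qᴴ + pᴴ)⁻¹ * W' * (mconj q * W t + mconj p)⁻¹) t := by
  have hden : HasDerivAt (fun s => mconj q * W s + mconj p) (mconj q * W') t :=
    (hW.const_mul _).add_const _
  have hderiv : p * W' * (mconj q * W t + mconj p)⁻¹ + (p * W t + q)
        * -((mconj q * W t + mconj p)⁻¹ * (mconj q * W') * (mconj q * W t + mconj p)⁻¹)
      = (W t * qᴴ + pᴴ)⁻¹ * W' * (mconj q * W t + mconj p)⁻¹ := by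
    rw [inv_left_factor h3 h4 hA]
    noncomm_ring
  rw [← hderiv]
  exact ((hW.const_mul p).add_const q).mul (hden.matrix_inv hA)

end Derivative

theorem dW_transformation_and_trace_invariance_general (n : ℕ)
    (p q : Matrix (Fin n) (Fin n) ℂ)
    (h3 : pᴴ * p - qᵀ * mconj q = 1) (h4 : pᵀ * mconj q = qᴴ * p) :
    -- (a) derivative of the moved point along any curve W(t)
    (∀ (W : ℝ → Matrix (Fin n) (Fin n) ℂ) (W' : Matrix (Fin n) (Fin n) ℂ) (t : ℝ),
      (∀ i j, HasDerivAt (fun s => W s i j) (W' i j) t) →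
      (W t)ᵀ = W t →
      IsUnit ((1 : Matrix (Fin n) (Fin n) ℂ) - W t * mconj (W t)) →
      IsUnit (mconj q * W t + mconj p) →
      ∀ i j, HasDerivAt (fun s => ((p * W s + q) * (mconj q * W s + mconj p)⁻¹) i j)
        (((W t * qᴴ + pᴴ)⁻¹ * W' * (mconj q * W t + mconj p)⁻¹) i j) t)
    ∧
    -- (b) invariance of the trace form
    (∀ (W dW : Matrix (Fin n) (Fin n) ℂ),
      Wᵀ = W →
      IsUnit ((1 : Matrix (Fin n) (Fin n) ℂ) - W * mconj W) →
      IsUnit (mconj q * W + mconj p) →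
      let W₁ := (p * W + q) * (mconj q * W + mconj p)⁻¹
      let dW₁ := (W * qᴴ + pᴴ)⁻¹ * dW * (mconj q * W + mconj p)⁻¹
      let M := ((1 : Matrix (Fin n) (Fin n) ℂ) - W * mconj W)⁻¹
      let M₁ := ((1 : Matrix (Fin n) (Fin n) ℂ) - W₁ * mconj W₁)⁻¹
      Matrix.trace (M₁ * dW₁ * mconj M₁ * mconj dW₁)
        = Matrix.trace (M * dW * mconj M * mconj dW)) := by
  refine ⟨fun W W' t hW _ _ hA => ?_, fun W dW _ _ hA => ?_⟩
  · exact hasDerivAt_matrix_iff.mp (hasDerivAt_moebius h3 h4 (hasDerivAt_matrix_iff.mpr hW) hA)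
  · intro W₁ dW₁ M M₁
    have hM₁ : M₁ = mconj (mconj q * W + mconj p) * M * (W * qᴴ + pᴴ) :=
      inv_one_sub_moebius_mul_mconj h3 h4 hA
    rw [hM₁]
    exact trace_mconj_form_congr hA (isUnit_left_factor h3 h4 hA) M dW

/-- dW₁ = (Wq* + p*)⁻¹ dW (q̄W + p̄)⁻¹ for the Sp(n,ℝ)_ℂ action on the
Siegel ball (stated for any differentiable curve W(t)), and consequently the trace form
Tr(M dW M̄ dW̄) is invariant. -/
theorem dW_transformation_and_trace_invariance (n : ℕ)
    (p q : Matrix (Fin n) (Fin n) ℂ)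
    (h1 : p * pᴴ - q * qᴴ = 1) (h2 : p * qᵀ = q * pᵀ)
    (h3 : pᴴ * p - qᵀ * mconj q = 1) (h4 : pᵀ * mconj q = qᴴ * p) :
    -- (a) derivative of the moved point along any curve W(t)
    (∀ (W : ℝ → Matrix (Fin n) (Fin n) ℂ) (W' : Matrix (Fin n) (Fin n) ℂ) (t : ℝ),
      (∀ i j, HasDerivAt (fun s => W s i j) (W' i j) t) →
      (W t)ᵀ = W t →
      IsUnit ((1 : Matrix (Fin n) (Fin n) ℂ) - W t * mconj (W t)) →
      IsUnit (mconj q * W t + mconj p) →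
      ∀ i j, HasDerivAt (fun s => ((p * W s + q) * (mconj q * W s + mconj p)⁻¹) i j)
        (((W t * qᴴ + pᴴ)⁻¹ * W' * (mconj q * W t + mconj p)⁻¹) i j) t)
    ∧
    -- (b) invariance of the trace form
    (∀ (W dW : Matrix (Fin n) (Fin n) ℂ),
      Wᵀ = W →
      IsUnit ((1 : Matrix (Fin n) (Fin n) ℂ) - W * mconj W) →
      IsUnit (mconj q * W + mconj p) →
      let W₁ := (p * W + q) * (mconj q * W + mconj p)⁻¹
      let dW₁ := (W * qᴴ + pᴴ)⁻¹ * dW * (mconj q * W + mconj p)⁻¹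
      let M := ((1 : Matrix (Fin n) (Fin n) ℂ) - W * mconj W)⁻¹
      let M₁ := ((1 : Matrix (Fin n) (Fin n) ℂ) - W₁ * mconj W₁)⁻¹
      Matrix.trace (M₁ * dW₁ * mconj M₁ * mconj dW₁)
        = Matrix.trace (M * dW * mconj M * mconj dW)) :=
  dW_transformation_and_trace_invariance_general n p q h3 h4
end
end

section
/- Let h be the block matrix h = [[h₁, h₂],[h₃, h₄]] of the balanced metric of the Siegel–Jacobi ball, with entries h_{ij} = μ M̄_{ij}, h_{i,pq} = μ(η_q M̄_{ip} + η_p M̄_{iq}) f_{pq}, h_{pq,i} = μ(η̄_q M̄_{pi} + η̄_p M̄_{qi}) f_{pq}, and h_{pq,mn} = (k/2) h^k_{pq,mn} + μ h^μ_{pq,mn}, where h^μ_{pq,mn} = [η̄_p(η_n M̄_{qm} + η_m M̄_{qn}) + η̄_q(η_n M̄_{pm} + η_m M̄_{pn})] f_{pq} f_{mn}. Then h₃ h₁⁻¹ h₂ = μ h^μ, i.e., (h₃ h₁⁻¹ h₂)_{pq,mn} = μ h^μ_{pq,mn} for all p ≤ q, m ≤ n. -/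
open Matrix BigOperators

noncomputable section

/-- f_{pq} = 1 - δ_{pq}/2 -/
def fsym {d : ℕ} (p q : Fin d) : ℂ := 1 - kd p q / 2

/-! A row of h₃ is μ f_pq times u ᵥ* M̄ with u = η̄_q e_p + η̄_p e_q, and a column of h₂ is
μ f_mn times M̄ *ᵥ v with v = η_n e_m + η_m e_n. Sandwiching h₁⁻¹ = (1/μ) M̄⁻¹ between them and using
M̄ M̄⁻¹ M̄ = M̄ collapses the double sum to μ f_pq f_mn (u ⬝ᵥ M̄ *ᵥ v), which expands to μ h^μ_{pq,mn}. -/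

namespace Matrix

variable {n R : Type*} [Fintype n] [DecidableEq n] [CommRing R]

theorem sum_sum_vecMul_mul_nonsing_inv_mul_mulVec {B : Matrix n n R} (hB : IsUnit B.det)
    (x y : n → R) :
    ∑ i, ∑ j, (x ᵥ* B) i * B⁻¹ i j * (B *ᵥ y) j = x ⬝ᵥ B *ᵥ y := by
  have hsum : ∑ i, ∑ j, (x ᵥ* B) i * B⁻¹ i j * (B *ᵥ y) j = (x ᵥ* B) ⬝ᵥ B⁻¹ *ᵥ B *ᵥ y := by
    simp only [dotProduct, mulVec, Finset.mul_sum, mul_assoc]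
  rw [hsum, mulVec_mulVec, nonsing_inv_mul B hB, one_mulVec, dotProduct_mulVec]

theorem single_add_single_vecMul_apply (B : Matrix n n R) (p q i : n) (a b : R) :
    ((Pi.single p a + Pi.single q b) ᵥ* B) i = a * B p i + b * B q i := by
  simp [add_vecMul, single_vecMul]

theorem mulVec_single_add_single_apply (B : Matrix n n R) (m m' j : n) (a b : R) :
    (B *ᵥ (Pi.single m a + Pi.single m' b)) j = a * B j m + b * B j m' := by
  simp [mulVec_add, mulVec_single]

end Matrix

theorem isUnit_det_mconj {n : Type*} [Fintype n] [DecidableEq n] {A : Matrix n n ℂ}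
    (hA : IsUnit A.det) : IsUnit (mconj A).det :=
  (RingHom.map_det (starRingEnd ℂ) A) ▸ hA.map (starRingEnd ℂ)

theorem schur_offdiag_general (d : ℕ) (W : Matrix (Fin d) (Fin d) ℂ)
    (hinv : IsUnit ((1 : Matrix (Fin d) (Fin d) ℂ) - W * mconj W))
    (M Mb : Matrix (Fin d) (Fin d) ℂ)
    (hM : M = (1 - W * mconj W)⁻¹) (hMb : Mb = mconj M)
    (η : Fin d → ℂ) (ηb : Fin d → ℂ)
    (μ : ℝ)
    (h2 : Fin d → Fin d → Fin d → ℂ)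
    (hh2 : ∀ i p q, h2 i p q = (μ : ℂ) * (η q * Mb i p + η p * Mb i q) * fsym p q)
    (h3 : Fin d → Fin d → Fin d → ℂ)
    (hh3 : ∀ p q i, h3 p q i = (μ : ℂ) * (ηb q * Mb p i + ηb p * Mb q i) * fsym p q)
    (hμmat : Fin d → Fin d → Fin d → Fin d → ℂ)
    (hhμ : ∀ p q m n, hμmat p q m n =
      (ηb p * (η n * Mb q m + η m * Mb q n) + ηb q * (η n * Mb p m + η m * Mb p n))
        * fsym p q * fsym m n) :
    ∀ p q m n : Fin d, p ≤ q → m ≤ n →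
      (∑ i : Fin d, ∑ j : Fin d, h3 p q i * ((1/(μ:ℂ)) * Mb⁻¹ i j) * h2 j m n)
        = (μ : ℂ) * hμmat p q m n := by
  intro p q m n _ _
  have hMb_det : IsUnit Mb.det := by
    rw [hMb, hM]
    exact isUnit_det_mconj (isUnit_nonsing_inv_det _ ((isUnit_iff_isUnit_det _).mp hinv))
  set u : Fin d → ℂ := Pi.single p (ηb q) + Pi.single q (ηb p)
  set v : Fin d → ℂ := Pi.single m (η n) + Pi.single n (η m)
  calc (∑ i, ∑ j, h3 p q i * ((1/(μ:ℂ)) * Mb⁻¹ i j) * h2 j m n)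
      = μ * fsym p q * fsym m n * ∑ i, ∑ j, (u ᵥ* Mb) i * Mb⁻¹ i j * (Mb *ᵥ v) j := by
        simp only [Finset.mul_sum, hh3, hh2, u, v, single_add_single_vecMul_apply,
          mulVec_single_add_single_apply]
        refine Finset.sum_congr rfl fun i _ => Finset.sum_congr rfl fun j _ => ?_
        -- `μ * μ⁻¹ * μ = μ` needs no `μ ≠ 0`, since `0⁻¹ = 0`
        field_simp
    _ = μ * fsym p q * fsym m n * (u ⬝ᵥ Mb *ᵥ v) := by
        rw [sum_sum_vecMul_mul_nonsing_inv_mul_mulVec hMb_det]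
    _ = μ * hμmat p q m n := by
        simp only [u, v, hhμ, add_dotProduct, single_dotProduct, mulVec_single_add_single_apply]
        ring

/-- h₃ h₁⁻¹ h₂ = μ h^μ for the blocks of the balanced metric of the
Siegel--Jacobi ball. -/
theorem schur_offdiag (d : ℕ) (W : Matrix (Fin d) (Fin d) ℂ) (hWsymm : Wᵀ = W)
    (hinv : IsUnit ((1 : Matrix (Fin d) (Fin d) ℂ) - W * mconj W))
    (M Mb : Matrix (Fin d) (Fin d) ℂ)
    (hM : M = (1 - W * mconj W)⁻¹) (hMb : Mb = mconj M)
    (η : Fin d → ℂ) (ηb : Fin d → ℂ) (hηb : ηb = fun i => starRingEnd ℂ (η i))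
    (μ k : ℝ) (hμ : 0 < μ)
    (h2 : Fin d → Fin d → Fin d → ℂ)
    (hh2 : ∀ i p q, h2 i p q = (μ : ℂ) * (η q * Mb i p + η p * Mb i q) * fsym p q)
    (h3 : Fin d → Fin d → Fin d → ℂ)
    (hh3 : ∀ p q i, h3 p q i = (μ : ℂ) * (ηb q * Mb p i + ηb p * Mb q i) * fsym p q)
    (hμmat : Fin d → Fin d → Fin d → Fin d → ℂ)
    (hhμ : ∀ p q m n, hμmat p q m n =
      (ηb p * (η n * Mb q m + η m * Mb q n) + ηb q * (η n * Mb p m + η m * Mb p n))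
        * fsym p q * fsym m n) :
    ∀ p q m n : Fin d, p ≤ q → m ≤ n →
      (∑ i : Fin d, ∑ j : Fin d, h3 p q i * ((1/(μ:ℂ)) * Mb⁻¹ i j) * h2 j m n)
        = (μ : ℂ) * hμmat p q m n :=
  schur_offdiag_general d W hinv M Mb hM hMb η ηb μ h2 hh2 h3 hh3 hμmat hhμ
end
end

section
/- With the notation above, define h⁴ to be the matrix with entries (h⁴)_{pq,mn} = (1/k)(M̄⁻¹_{qn}M̄⁻¹_{pm} + M̄⁻¹_{pn}M̄⁻¹_{qm}) for p ≤ q, m ≤ n. Then the Schur complement satisfies (h₄ - h₃h₁⁻¹h₂)·h⁴ = Δ, i.e., Σ_{m≤n} [(k/2) h^k_{pq,mn}]·(h⁴)_{mn,uv} = Δ^{uv}_{pq} for all p ≤ q, u ≤ v. -/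
open Matrix BigOperators

noncomputable section

namespace SchurAux

variable {d : ℕ}

lemma kd_comm (i j : Fin d) : kd i j = kd j i := by simp [kd, eq_comm]

lemma mconj_mul (A B : Matrix (Fin d) (Fin d) ℂ) : mconj (A * B) = mconj A * mconj B := by
  ext i j; simp [mconj, Matrix.mul_apply, map_sum]

lemma mconj_one : mconj (1 : Matrix (Fin d) (Fin d) ℂ) = 1 := by
  ext i j; simp [mconj, Matrix.one_apply, apply_ite]

lemma mconj_sub (A B : Matrix (Fin d) (Fin d) ℂ) : mconj (A - B) = mconj A - mconj B := by
  ext i j; simp [mconj]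

lemma mconj_mconj (A : Matrix (Fin d) (Fin d) ℂ) : mconj (mconj A) = A := by
  ext i j; simp [mconj]

lemma mconj_transpose (A : Matrix (Fin d) (Fin d) ℂ) : (mconj A)ᵀ = mconj Aᵀ := by
  ext i j; simp [mconj]

lemma mconj_eq_ct (A : Matrix (Fin d) (Fin d) ℂ) : mconj A = Aᴴᵀ := by
  ext i j; simp [mconj]

lemma sum_kd_mul (m : Fin d) (c : ℂ) : ∑ n, kd m n * c = c := by
  simp [kd, ite_mul]

lemma key (d : ℕ) (W : Matrix (Fin d) (Fin d) ℂ) (hWsymm : Wᵀ = W)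
    (hinv : IsUnit ((1 : Matrix (Fin d) (Fin d) ℂ) - W * mconj W))
    (M Mb : Matrix (Fin d) (Fin d) ℂ)
    (hM : M = (1 - W * mconj W)⁻¹) (hMb : Mb = mconj M) :
    ∀ a b, ∑ m, M m a * Mb⁻¹ m b = kd a b := by
  set N : Matrix (Fin d) (Fin d) ℂ := 1 - W * mconj W with hN
  have hdet : IsUnit N.det := (Matrix.isUnit_iff_isUnit_det N).mp hinv
  have hNT : Nᵀ = mconj N := by
    rw [hN, transpose_sub, transpose_one, transpose_mul, mconj_transpose, hWsymm,
      mconj_sub, mconj_one, mconj_mul, mconj_mconj]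
  have h1 : mconj (N⁻¹) = (mconj N)⁻¹ := by
    rw [mconj_eq_ct, mconj_eq_ct, Matrix.conjTranspose_nonsing_inv,
      Matrix.transpose_nonsing_inv]
  have hMb' : Mb⁻¹ = Nᵀ := by
    rw [hMb, hM, h1, ← hNT, Matrix.nonsing_inv_nonsing_inv]
    rwa [Matrix.det_transpose]
  intro a b
  have hNM : N * M = 1 := by rw [hM]; exact Matrix.mul_nonsing_inv N hdet
  calc ∑ m, M m a * Mb⁻¹ m b = ∑ m, N b m * M m a := by
        rw [hMb']; exact Finset.sum_congr rfl (fun m _ => by rw [Matrix.transpose_apply]; ring)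
    _ = (N * M) b a := (Matrix.mul_apply).symm
    _ = kd a b := by rw [hNM, Matrix.one_apply]; simp [kd, eq_comm]

lemma sum_le_sym (f : Fin d → Fin d → ℂ) (hsym : ∀ m n, f m n = f n m) :
    (∑ m, ∑ n, if m ≤ n then f m n else 0)
      = (1/2) * ((∑ m, ∑ n, f m n) + ∑ m, f m m) := by
  have h : (∑ m, ∑ n, if m ≤ n then f m n else 0)
        + (∑ m, ∑ n, if m ≤ n then f m n else 0)
      = (∑ m, ∑ n, f m n) + ∑ m, f m m := by
    have h1 : (∑ m, ∑ n, if m ≤ n then f m n else 0)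
        = ∑ m, ∑ n, if n ≤ m then f m n else 0 := by
      rw [Finset.sum_comm]
      exact Finset.sum_congr rfl fun m _ => Finset.sum_congr rfl fun n _ => by
        rw [hsym]
    nth_rewrite 2 [h1]
    calc (∑ m, ∑ n, if m ≤ n then f m n else 0) + (∑ m, ∑ n, (if n ≤ m then f m n else 0))
        = ∑ m, ∑ n, ((if m ≤ n then f m n else 0) + (if n ≤ m then f m n else 0)) := by
          rw [← Finset.sum_add_distrib]
          exact Finset.sum_congr rfl fun m _ => (Finset.sum_add_distrib).symm
      _ = ∑ m, ∑ n, (f m n + if m = n then f m n else 0) := by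
          refine Finset.sum_congr rfl fun m _ => Finset.sum_congr rfl fun n _ => ?_
          rcases lt_trichotomy m n with h|h|h
          · simp [le_of_lt h, not_le.mpr h, h.ne]
          · simp [h]
          · simp [le_of_lt h, not_le.mpr h, h.ne']
      _ = (∑ m, ∑ n, f m n) + ∑ m, f m m := by
          rw [← Finset.sum_add_distrib]
          refine Finset.sum_congr rfl fun m _ => ?_
          rw [Finset.sum_add_distrib]
          simp
  linear_combination h / 2


lemma kd_id (u v p : Fin d) : kd u v * kd u p = kd u p * kd v p := by
  unfold kd
  by_cases h1 : u = p
  · subst h1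
    rcases eq_or_ne v u with rfl | h2
    · rfl
    · simp [h2, Ne.symm h2]
  · simp [h1]

end SchurAux

/-- the Schur complement (k/2)h^k times h⁴ equals the symmetric
Kronecker delta Δ. -/
theorem schur_inverse (d : ℕ) (W : Matrix (Fin d) (Fin d) ℂ) (hWsymm : Wᵀ = W)
    (hinv : IsUnit ((1 : Matrix (Fin d) (Fin d) ℂ) - W * mconj W))
    (M Mb : Matrix (Fin d) (Fin d) ℂ)
    (hM : M = (1 - W * mconj W)⁻¹) (hMb : Mb = mconj M)
    (k : ℝ) (hk : 0 < k)
    (hkmat : Fin d → Fin d → Fin d → Fin d → ℂ)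
    (hhk : ∀ p q m n, hkmat p q m n =
      2 * M m p * M n q * (1 - kd p q) + 2 * M m q * M n p * (1 - kd m n)
        + M m p * M m p * kd p q * kd m n)
    (h4 : Fin d → Fin d → Fin d → Fin d → ℂ)
    (hh4 : ∀ p q m n, h4 p q m n =
      (1/(k:ℂ)) * (Mb⁻¹ q n * Mb⁻¹ p m + Mb⁻¹ p n * Mb⁻¹ q m)) :
    ∀ p q u v : Fin d, p ≤ q → u ≤ v →
      (∑ m : Fin d, ∑ n : Fin d,
          if m ≤ n then ((k:ℂ)/2) * hkmat p q m n * h4 m n u v else 0)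
        = kd u p * kd v q + kd u q * kd v p - kd u v * kd p q * kd u p := by
  intro p q u v hpq huv
  have hkey := SchurAux.key d W hWsymm hinv M Mb hM hMb
  have hk0 : (k:ℂ) ≠ 0 := by exact_mod_cast hk.ne'
  set B : Matrix (Fin d) (Fin d) ℂ := Mb⁻¹ with hB
  set H : Fin d → Fin d → ℂ := fun m n => B n v * B m u + B m v * B n u with hH
  have hHsym : ∀ m n, H m n = H n m := fun m n => by simp only [hH]; ring
  have hT : ∀ a b : Fin d, (∑ m, ∑ n, M m a * M n b * H m n)
      = kd a u * kd b v + kd a v * kd b u := by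
    intro a b
    have inner : ∀ m : Fin d, (∑ n, M m a * M n b * H m n)
        = (M m a * B m u) * kd b v + (M m a * B m v) * kd b u := by
      intro m
      calc (∑ n, M m a * M n b * H m n)
          = ∑ n, ((M m a * B m u) * (M n b * B n v) + (M m a * B m v) * (M n b * B n u)) :=
            Finset.sum_congr rfl fun n _ => by simp only [hH]; ring
        _ = (M m a * B m u) * (∑ n, M n b * B n v) + (M m a * B m v) * (∑ n, M n b * B n u) := by
            rw [Finset.sum_add_distrib, ← Finset.mul_sum, ← Finset.mul_sum]
        _ = (M m a * B m u) * kd b v + (M m a * B m v) * kd b u := by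
            rw [hkey b v, hkey b u]
    calc (∑ m, ∑ n, M m a * M n b * H m n)
        = ∑ m, ((M m a * B m u) * kd b v + (M m a * B m v) * kd b u) :=
          Finset.sum_congr rfl fun m _ => inner m
      _ = (∑ m, M m a * B m u) * kd b v + (∑ m, M m a * B m v) * kd b u := by
          rw [Finset.sum_add_distrib, ← Finset.sum_mul, ← Finset.sum_mul]
      _ = kd a u * kd b v + kd a v * kd b u := by rw [hkey a u, hkey a v]
  have hT' : (∑ m, ∑ n, M n p * M m q * H m n)
      = kd p u * kd q v + kd p v * kd q u := by
    rw [Finset.sum_comm]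
    calc (∑ n, ∑ m, M n p * M m q * H m n)
        = ∑ n, ∑ m, M n p * M m q * H n m :=
          Finset.sum_congr rfl fun n _ => Finset.sum_congr rfl fun m _ => by rw [hHsym m n]
      _ = kd p u * kd q v + kd p v * kd q u := hT p q
  have hdiag : ∀ (c : Fin d → ℂ), (∑ m, ∑ n, kd m n * c m) = ∑ m, c m := fun c =>
    Finset.sum_congr rfl fun m _ => SchurAux.sum_kd_mul m (c m)
  rcases eq_or_ne p q with rfl | hne
  · -- case p = q
    have hpp : kd p p = 1 := by simp [kd]
    have claim : ∀ m n : Fin d, ((k:ℂ)/2) * hkmat p p m n * h4 m n u v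
        = M m p * M n p * H m n - (1/2) * (kd m n * (M m p * M m p * H m m)) := by
      intro m n
      rw [hhk, hh4, hpp]
      rcases eq_or_ne m n with rfl | hmn
      · have h2 : kd m m = 1 := by simp [kd]
        rw [h2]; simp only [hH]; field_simp; ring
      · have h2 : kd m n = 0 := by simp [kd, hmn]
        rw [h2]; simp only [hH]; field_simp; ring
    set F : Fin d → Fin d → ℂ := fun m n =>
      M m p * M n p * H m n - (1/2) * (kd m n * (M m p * M m p * H m m)) with hF
    have hFsym : ∀ m n, F m n = F n m := by
      intro m n
      rcases eq_or_ne m n with rfl | hmn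
      · rfl
      · have h1 : kd m n = 0 := by simp [kd, hmn]
        have h2 : kd n m = 0 := by simp [kd, hmn.symm]
        simp only [hF, h1, h2, hHsym m n]; ring
    calc (∑ m, ∑ n, if m ≤ n then ((k:ℂ)/2) * hkmat p p m n * h4 m n u v else 0)
        = ∑ m, ∑ n, if m ≤ n then F m n else 0 := by
          refine Finset.sum_congr rfl fun m _ => Finset.sum_congr rfl fun n _ => ?_
          rw [claim m n]
      _ = (1/2) * ((∑ m, ∑ n, F m n) + ∑ m, F m m) := SchurAux.sum_le_sym F hFsym
      _ = kd u p * kd v p + kd u p * kd v p - kd u v * kd p p * kd u p := by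
          have e1 : (∑ m, ∑ n, F m n)
              = (kd p u * kd p v + kd p v * kd p u)
                - (1/2) * ∑ m, M m p * M m p * H m m := by
            simp only [hF, Finset.sum_sub_distrib]
            rw [hT p p]
            congr 1
            calc (∑ m, ∑ n, (1/2 : ℂ) * (kd m n * (M m p * M m p * H m m)))
                = ∑ m, (1/2 : ℂ) * ∑ n, kd m n * (M m p * M m p * H m m) :=
                  Finset.sum_congr rfl fun m _ => by rw [← Finset.mul_sum]
              _ = ∑ m, (1/2 : ℂ) * (M m p * M m p * H m m) :=
                  Finset.sum_congr rfl fun m _ => by rw [SchurAux.sum_kd_mul]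
              _ = (1/2) * ∑ m, M m p * M m p * H m m := by rw [Finset.mul_sum]
          have e2 : (∑ m, F m m) = (1/2) * ∑ m, M m p * M m p * H m m := by
            rw [Finset.mul_sum]
            refine Finset.sum_congr rfl fun m _ => ?_
            have hmm : kd m m = 1 := by simp [kd]
            simp only [hF, hmm]; ring
          rw [e1, e2, hpp, SchurAux.kd_comm p u, SchurAux.kd_comm p v]
          linear_combination SchurAux.kd_id u v p
  · -- case p ≠ q
    have hpq0 : kd p q = 0 := by simp [kd, hne]
    have claim : ∀ m n : Fin d, ((k:ℂ)/2) * hkmat p q m n * h4 m n u v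
        = M m p * M n q * H m n + M n p * M m q * H m n
          - kd m n * (M m p * M m q * H m m) := by
      intro m n
      rw [hhk, hh4, hpq0]
      rcases eq_or_ne m n with rfl | hmn
      · have h2 : kd m m = 1 := by simp [kd]
        rw [h2]; simp only [hH]; field_simp; ring
      · have h2 : kd m n = 0 := by simp [kd, hmn]
        rw [h2]; simp only [hH]; field_simp; ring
    set F : Fin d → Fin d → ℂ := fun m n =>
      M m p * M n q * H m n + M n p * M m q * H m n
        - kd m n * (M m p * M m q * H m m) with hF
    have hFsym : ∀ m n, F m n = F n m := by
      intro m n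
      rcases eq_or_ne m n with rfl | hmn
      · rfl
      · have h1 : kd m n = 0 := by simp [kd, hmn]
        have h2 : kd n m = 0 := by simp [kd, hmn.symm]
        simp only [hF, h1, h2, hHsym m n]; ring
    calc (∑ m, ∑ n, if m ≤ n then ((k:ℂ)/2) * hkmat p q m n * h4 m n u v else 0)
        = ∑ m, ∑ n, if m ≤ n then F m n else 0 := by
          refine Finset.sum_congr rfl fun m _ => Finset.sum_congr rfl fun n _ => ?_
          rw [claim m n]
      _ = (1/2) * ((∑ m, ∑ n, F m n) + ∑ m, F m m) := SchurAux.sum_le_sym F hFsym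
      _ = kd u p * kd v q + kd u q * kd v p - kd u v * kd p q * kd u p := by
          have e1 : (∑ m, ∑ n, F m n)
              = (kd p u * kd q v + kd p v * kd q u) + (kd p u * kd q v + kd p v * kd q u)
                - ∑ m, M m p * M m q * H m m := by
            simp only [hF, Finset.sum_sub_distrib, Finset.sum_add_distrib]
            rw [hT p q, hT', hdiag (fun m => M m p * M m q * H m m)]
          have e2 : (∑ m, F m m) = ∑ m, M m p * M m q * H m m := by
            refine Finset.sum_congr rfl fun m _ => ?_
            have hmm : kd m m = 1 := by simp [kd]
            simp only [hF, hmm]; ring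
          rw [e1, e2, hpq0, SchurAux.kd_comm p u, SchurAux.kd_comm p v,
            SchurAux.kd_comm q u, SchurAux.kd_comm q v]
          ring
end
end
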